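/- arXiv:2601.12701 — 5 statements merged into one kernel-verified Lean document; each statement's English description precedes it below -/
import Mathlib

section
/- Let V be a set with edge costs c : V × V → ℝ that are nonnegative and satisfy the triangle inequality c(a, b') ≤ c(a, b) + c(b, b') for all a, b, b' ∈ V. Let v_1, …, v_N (N ≥ 3) be a sequence of vertices with per-position probabilities p_1, …, p_N ∈ [0, 1], and suppose 2 ≤ k ≤ N−1 and p_k = 0. Then deleting position k does not increase the expected path cost: ∑_{i=1}^{N'−1} q'_i · c(w_i, w_{i+1}) ≤ ∑_{i=1}^{N−1} q_i · c(v_i, v_{i+1}), where (w_1, …, w_{N'}) = (v_1, …, v_{k−1}, v_{k+1}, …, v_N) with the corresponding probabilities (p_1, …, p_{k−1}, p_{k+1}, …, p_N), q_i := ∏_{j=1}^{i} (1 − p_j), and q'_i is the analogous prefix product for the shortened sequence. -/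
/-!
On the positions `i ≠ k - 1` the shortened path has the same edges as the original one, and
`p k = 0` makes the survival probability after position `k` equal to the one after `k - 1`.
The single new edge `(v (k-1), v (k+1))` therefore carries the weight `q (k-1) = q k`, and the
triangle inequality bounds its cost by the two edges `(v (k-1), v k)` and `(v k, v (k+1))` it
replaces.
-/

open Finset

/-- The order embedding `ℕ ↪ ℕ` whose range misses `k`, as `Fin.succAbove`. -/
def Nat.succAbove (k i : ℕ) : ℕ := if i < k then i else i + 1

namespace Nat

lemma succAbove_injective (k : ℕ) : Function.Injective (succAbove k) := by
  intro i j h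
  unfold succAbove at h
  split_ifs at h <;> omega

lemma succAbove_add_one {k i : ℕ} (h : i + 1 ≠ k) : succAbove k (i + 1) = succAbove k i + 1 := by
  unfold succAbove
  split_ifs <;> omega

lemma image_succAbove_Icc_one {k n : ℕ} (hk1 : 1 ≤ k) (hk2 : k ≤ n + 1) :
    (Icc 1 n).image (succAbove k) = (Icc 1 (n + 1)).erase k := by
  ext j
  simp only [mem_image, mem_Icc, mem_erase, succAbove]
  constructor
  · rintro ⟨i, hi, rfl⟩
    split_ifs <;> omega
  · intro hj
    by_cases hjk : j < k
    · exact ⟨j, by omega, if_pos hjk⟩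
    · exact ⟨j - 1, by omega, by rw [if_neg (by omega)]; omega⟩

lemma prod_Icc_one_comp_succAbove {M : Type*} [CommMonoid M] {g : ℕ → M} {k : ℕ}
    (hk : 1 ≤ k) (hgk : g k = 1) (n : ℕ) :
    ∏ j ∈ Icc 1 n, g (succAbove k j) = ∏ j ∈ Icc 1 (succAbove k n), g j := by
  by_cases hn : n < k
  · rw [succAbove, if_pos hn]
    refine prod_congr rfl fun j hj => ?_
    rw [succAbove, if_pos (by simp only [mem_Icc] at hj; omega)]
  · rw [succAbove, if_neg hn, ← prod_erase _ hgk, ← image_succAbove_Icc_one hk (by omega),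
      prod_image fun i _ j _ h => succAbove_injective k h]

lemma sum_Icc_one_comp_succAbove_add {M : Type*} [AddCommMonoid M] (F : ℕ → M) {k n : ℕ}
    (hk1 : 1 ≤ k) (hk2 : k ≤ n + 1) :
    ∑ i ∈ Icc 1 n, F (succAbove k i) + F k = ∑ i ∈ Icc 1 (n + 1), F i := by
  rw [← sum_image fun i _ j _ h => succAbove_injective k h, image_succAbove_Icc_one hk1 hk2,
    sum_erase_add _ _ (mem_Icc.2 ⟨hk1, hk2⟩)]

end Nat

lemma Finset.sum_le_sum_add_of_le_of_ne {ι M : Type*} [AddCommMonoid M] [PartialOrder M]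
    [IsOrderedAddMonoid M] [DecidableEq ι] {s : Finset ι} {a b : ι → M} {m : ι} {x : M}
    (hm : m ∈ s) (hle : ∀ i ∈ s, i ≠ m → a i ≤ b i) (hle_m : a m ≤ b m + x) :
    ∑ i ∈ s, a i ≤ ∑ i ∈ s, b i + x := by
  calc ∑ i ∈ s, a i ≤ ∑ i ∈ s, (b i + if i = m then x else 0) := by
        refine sum_le_sum fun i hi => ?_
        by_cases him : i = m
        · subst him; simpa using hle_m
        · simpa [him] using hle i hi him
    _ = ∑ i ∈ s, b i + x := by rw [sum_add_distrib, sum_ite_eq' s m, if_pos hm]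

section ExpectedCost

variable {V : Type*}

/-- `survival p i = q_i`, the probability that the walk has not terminated after position `i`. -/
def survival (p : ℕ → ℝ) (i : ℕ) : ℝ := ∏ j ∈ Icc 1 i, (1 - p j)

/-- The expected cost of the walk along `v 1, …, v (n + 1)`. -/
def expectedCost (c : V → V → ℝ) (p : ℕ → ℝ) (v : ℕ → V) (n : ℕ) : ℝ :=
  ∑ i ∈ Icc 1 n, survival p i * c (v i) (v (i + 1))

lemma survival_comp_succAbove {p : ℕ → ℝ} {k : ℕ} (hk : 1 ≤ k) (hpk : p k = 0) (i : ℕ) :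
    survival (fun j => p (Nat.succAbove k j)) i = survival p (Nat.succAbove k i) :=
  Nat.prod_Icc_one_comp_succAbove (g := fun j => 1 - p j) hk (by simp [hpk]) i

lemma survival_eq_of_eq_zero {p : ℕ → ℝ} {k : ℕ} (hk : 1 ≤ k) (hpk : p k = 0) :
    survival p k = survival p (k - 1) := by
  obtain ⟨k, rfl⟩ := Nat.exists_eq_add_of_le' hk
  rw [survival, prod_Icc_succ_top (by omega), hpk, sub_zero, mul_one, Nat.add_sub_cancel]
  rfl

theorem expectedCost_comp_succAbove_le (c : V → V → ℝ)
    (htri : ∀ a b b', c a b' ≤ c a b + c b b') (p : ℕ → ℝ) (v : ℕ → V) {k n : ℕ}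
    (hk1 : 2 ≤ k) (hk2 : k ≤ n + 1) (hpk : p k = 0) (hq : 0 ≤ survival p (k - 1)) :
    expectedCost c (fun j => p (Nat.succAbove k j)) (fun i => v (Nat.succAbove k i)) n
      ≤ expectedCost c p v (n + 1) := by
  set F : ℕ → ℝ := fun i => survival p i * c (v i) (v (i + 1))
  have hsucc_pred : k - 1 + 1 = k := by omega
  have hpred : Nat.succAbove k (k - 1) = k - 1 := if_pos (by omega)
  have hself : Nat.succAbove k k = k + 1 := if_neg (lt_irrefl k)
  rw [expectedCost, expectedCost, ← Nat.sum_Icc_one_comp_succAbove_add F (by omega) hk2]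
  refine sum_le_sum_add_of_le_of_ne (m := k - 1) (mem_Icc.2 ⟨by omega, by omega⟩)
    (fun i _ hi => ?_) ?_
  · rw [survival_comp_succAbove (by omega) hpk, Nat.succAbove_add_one (by omega)]
  · rw [survival_comp_succAbove (by omega) hpk, hsucc_pred, hpred, hself]
    calc survival p (k - 1) * c (v (k - 1)) (v (k + 1))
        ≤ survival p (k - 1) * (c (v (k - 1)) (v k) + c (v k) (v (k + 1))) :=
          mul_le_mul_of_nonneg_left (htri _ _ _) hq
      _ = F (k - 1) + F k := by
          simp only [F, survival_eq_of_eq_zero (by omega : 1 ≤ k) hpk, hsucc_pred]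
          ring

end ExpectedCost

theorem cutshort_zero_prob_general {V : Type*} (c : V → V → ℝ)
    (htri : ∀ a b b', c a b' ≤ c a b + c b b')
    (N : ℕ) (v : ℕ → V) (p : ℕ → ℝ)
    (hp : ∀ j, 1 ≤ j → j ≤ N → 0 ≤ p j ∧ p j ≤ 1)
    (k : ℕ) (hk1 : 2 ≤ k) (hk2 : k ≤ N - 1) (hpk : p k = 0)
    (w : ℕ → V) (hw : ∀ i, w i = if i < k then v i else v (i + 1))
    (p' : ℕ → ℝ) (hp' : ∀ i, p' i = if i < k then p i else p (i + 1)) :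
    (∑ i ∈ Finset.Icc 1 (N - 2),
        (∏ j ∈ Finset.Icc 1 i, (1 - p' j)) * c (w i) (w (i + 1)))
    ≤ ∑ i ∈ Finset.Icc 1 (N - 1),
        (∏ j ∈ Finset.Icc 1 i, (1 - p j)) * c (v i) (v (i + 1)) := by
  obtain rfl : w = fun i => v (Nat.succAbove k i) :=
    funext fun i => (hw i).trans (apply_ite v _ _ _).symm
  obtain rfl : p' = fun j => p (Nat.succAbove k j) :=
    funext fun j => (hp' j).trans (apply_ite p _ _ _).symm
  have hq : 0 ≤ survival p (k - 1) := prod_nonneg fun j hj => by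
    simp only [mem_Icc] at hj
    linarith [(hp j hj.1 (by omega)).2]
  have hN : N - 1 = N - 2 + 1 := by omega
  rw [hN]
  exact expectedCost_comp_succAbove_le c htri p v (n := N - 2) hk1 (by omega) hpk hq

/-- With nonnegative edge costs satisfying the triangle
inequality, for a sequence `v 1, …, v N` (`N ≥ 3`) with per-position
probabilities `p j ∈ [0,1]`, if `2 ≤ k ≤ N - 1` and `p k = 0`, then deleting
position `k` (yielding the sequence `w` with probabilities `p'`) does not
increase the expected path cost. -/
theorem cutshort_zero_prob {V : Type*} (c : V → V → ℝ)
    (hc0 : ∀ a b, 0 ≤ c a b)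
    (htri : ∀ a b b', c a b' ≤ c a b + c b b')
    (N : ℕ) (hN : 3 ≤ N) (v : ℕ → V) (p : ℕ → ℝ)
    (hp : ∀ j, 1 ≤ j → j ≤ N → 0 ≤ p j ∧ p j ≤ 1)
    (k : ℕ) (hk1 : 2 ≤ k) (hk2 : k ≤ N - 1) (hpk : p k = 0)
    (w : ℕ → V) (hw : ∀ i, w i = if i < k then v i else v (i + 1))
    (p' : ℕ → ℝ) (hp' : ∀ i, p' i = if i < k then p i else p (i + 1)) :
    (∑ i ∈ Finset.Icc 1 (N - 2),
        (∏ j ∈ Finset.Icc 1 i, (1 - p' j)) * c (w i) (w (i + 1)))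
    ≤ ∑ i ∈ Finset.Icc 1 (N - 1),
        (∏ j ∈ Finset.Icc 1 i, (1 - p j)) * c (v i) (v (i + 1)) :=
  cutshort_zero_prob_general c htri N v p hp k hk1 hk2 hpk w hw p' hp'
end

section
/- Let V be a finite type with at least two elements, let c : V → V → ℝ be nonnegative, and let p : V → ℝ satisfy 0 ≤ p(v) < 1 for all v. Define γ : V → ℕ → ℝ by γ(v, 0) = 0 and γ(v, i+1) = min_{u ≠ v} (1 − p(v)) · (c(v, u) + γ(u, i)). Then for every k ≥ 0 and every sequence u_0, u_1, …, u_k of vertices with u_{i+1} ≠ u_i for each 0 ≤ i ≤ k−1, one has γ(u_0, k) ≤ ∑_{i=0}^{k−1} (∏_{j=0}^{i} (1 − p(u_j))) · c(u_i, u_{i+1}). -/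
open Finset

section WalkCost

variable {V R : Type*} [CommRing R]

def expectedWalkCost (c : V → V → R) (p : V → R) (u : ℕ → V) (k : ℕ) : R :=
  ∑ i ∈ range k, (∏ j ∈ range (i + 1), (1 - p (u j))) * c (u i) (u (i + 1))

theorem expectedWalkCost_zero (c : V → V → R) (p : V → R) (u : ℕ → V) :
    expectedWalkCost c p u 0 = 0 := by
  simp [expectedWalkCost]

theorem expectedWalkCost_succ (c : V → V → R) (p : V → R) (u : ℕ → V) (k : ℕ) :
    expectedWalkCost c p u (k + 1) =
      (1 - p (u 0)) * (c (u 0) (u 1) + expectedWalkCost c p (fun n => u (n + 1)) k) := by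
  simp only [expectedWalkCost, sum_range_succ', prod_range_succ' _ (_ + 1), mul_add, mul_sum,
    zero_add, range_one, prod_singleton]
  rw [add_comm]
  congr 1
  refine sum_congr rfl fun i _ => ?_
  ring

theorem le_expectedWalkCost [PartialOrder R] [IsOrderedRing R]
    (c : V → V → R) (p : V → R) (hp : ∀ v, p v ≤ 1) (γ : V → ℕ → R)
    (hγ0 : ∀ v, γ v 0 ≤ 0)
    (hγ : ∀ v w i, w ≠ v → γ v (i + 1) ≤ (1 - p v) * (c v w + γ w i))
    (k : ℕ) (u : ℕ → V) (hu : ∀ i < k, u (i + 1) ≠ u i) :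
    γ (u 0) k ≤ expectedWalkCost c p u k := by
  induction k generalizing u with
  | zero => simpa only [expectedWalkCost_zero] using hγ0 (u 0)
  | succ k ih =>
    have htail : γ (u 1) k ≤ expectedWalkCost c p (fun n => u (n + 1)) k :=
      ih (fun n => u (n + 1)) fun i hi => hu (i + 1) (Nat.succ_lt_succ hi)
    calc γ (u 0) (k + 1) ≤ (1 - p (u 0)) * (c (u 0) (u 1) + γ (u 1) k) :=
          hγ _ _ _ (hu 0 k.succ_pos)
      _ ≤ (1 - p (u 0)) * (c (u 0) (u 1) + expectedWalkCost c p (fun n => u (n + 1)) k) := by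
          gcongr
          exact sub_nonneg.2 (hp _)
      _ = expectedWalkCost c p u (k + 1) := (expectedWalkCost_succ c p u k).symm

end WalkCost

theorem gamma_le_walk_cost_general {V : Type*} [Fintype V] [DecidableEq V]
    (c : V → V → ℝ)
    (p : V → ℝ) (hp : ∀ v, 0 ≤ p v ∧ p v < 1)
    (γ : V → ℕ → ℝ)
    (hγ0 : ∀ v, γ v 0 = 0)
    (hγ : ∀ (v : V) (i : ℕ) (hne : (Finset.univ.erase v).Nonempty),
      γ v (i + 1)
        = (Finset.univ.erase v).inf' hne (fun u => (1 - p v) * (c v u + γ u i)))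
    (k : ℕ) (u : ℕ → V) (hu : ∀ i < k, u (i + 1) ≠ u i) :
    γ (u 0) k ≤ ∑ i ∈ Finset.range k,
        (∏ j ∈ Finset.range (i + 1), (1 - p (u j))) * c (u i) (u (i + 1)) := by
  have hstep : ∀ v w i, w ≠ v → γ v (i + 1) ≤ (1 - p v) * (c v w + γ w i) := by
    intro v w i hwv
    have hw : w ∈ univ.erase v := mem_erase.2 ⟨hwv, mem_univ w⟩
    rw [hγ v i ⟨w, hw⟩]
    exact inf'_le _ hw
  exact le_expectedWalkCost c p (fun v => (hp v).2.le) γ (fun v => (hγ0 v).le) hstep k u hu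

/-- Let `V` be a finite type with at least two elements, `c`
nonnegative edge costs and `0 ≤ p v < 1`. Let `γ` be the RPT* heuristic table:
`γ v 0 = 0` and `γ v (i+1) = min_{u ≠ v} (1 - p v) * (c v u + γ u i)`.
Then for every `k` and every walk `u 0, …, u k` with consecutive vertices
distinct, `γ (u 0) k` is a lower bound on the expected cost of the walk. -/
theorem gamma_le_walk_cost {V : Type*} [Fintype V] [DecidableEq V] [Nontrivial V]
    (c : V → V → ℝ) (hc : ∀ a b, 0 ≤ c a b)
    (p : V → ℝ) (hp : ∀ v, 0 ≤ p v ∧ p v < 1)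
    (γ : V → ℕ → ℝ)
    (hγ0 : ∀ v, γ v 0 = 0)
    (hγ : ∀ (v : V) (i : ℕ) (hne : (Finset.univ.erase v).Nonempty),
      γ v (i + 1)
        = (Finset.univ.erase v).inf' hne (fun u => (1 - p v) * (c v u + γ u i)))
    (k : ℕ) (u : ℕ → V) (hu : ∀ i < k, u (i + 1) ≠ u i) :
    γ (u 0) k ≤ ∑ i ∈ Finset.range k,
        (∏ j ∈ Finset.range (i + 1), (1 - p (u j))) * c (u i) (u (i + 1)) :=
  gamma_le_walk_cost_general c p hp γ hγ0 hγ k u hu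
end

section
/- Let V be a set, let p : V → ℝ satisfy 0 ≤ p(v) < 1 for all v, and let c : V × V → ℝ be nonnegative and satisfy the triangle inequality c(a, b') ≤ c(a, b) + c(b, b') for all a, b, b' ∈ V. Let w = (w_1, …, w_N) be any finite sequence of vertices, possibly with repetitions, and let w' be the duplicate-free sequence obtained from w by keeping only the first occurrence of each vertex (in order). Then ξ_fv(w') ≤ ξ_fv(w), where ξ_fv(w) := ∑_{i=1}^{N−1} Q_i · c(w_i, w_{i+1}) and Q_i := ∏_{u ∈ {w_1,…,w_i}} (1 − p(u)) is the product over the set of distinct vertices among the first i entries. -/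
/-- First-visit expected cost, auxiliary: `S` is the set of vertices already
visited strictly before the current list. Each edge `c a b` is weighted by the
product of `(1 - p u)` over all distinct vertices visited so far (including
`a`). -/
noncomputable def xiFvAux {V : Type*} [DecidableEq V]
    (p : V → ℝ) (c : V → V → ℝ) : Finset V → List V → ℝ
  | _, [] => 0
  | _, [_] => 0
  | S, a :: b :: l =>
      (∏ u ∈ insert a S, (1 - p u)) * c a b + xiFvAux p c (insert a S) (b :: l)

/-- First-visit expected cost `ξ_fv` of a sequence of vertices (possibly with
repetitions): `ξ_fv(w) = ∑_{i=1}^{N-1} Q_i * c(w_i, w_{i+1})` where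
`Q_i = ∏_{u ∈ {w_1, …, w_i}} (1 - p u)` ranges over the *set* of distinct
vertices among the first `i` entries. -/
noncomputable def xiFv {V : Type*} [DecidableEq V]
    (p : V → ℝ) (c : V → V → ℝ) (w : List V) : ℝ :=
  xiFvAux p c ∅ w

/-- The duplicate-free sequence obtained from `w` by keeping only the first
occurrence of each vertex, in order. -/
def firstDedup {V : Type*} [DecidableEq V] : List V → List V
  | [] => []
  | a :: l => a :: firstDedup (l.filter (· ≠ a))
termination_by l => l.length
decreasing_by
  first
  | simpa using Nat.lt_succ_of_le ((List.length_filter_le _ _).trans_eq List.length_attach)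
  | (simp; exact (List.length_filter_le _ _).trans_eq List.length_attach)
  | (simp; exact (List.length_filter_le _ _).trans (by simp))

/-!
Once a vertex `x` has been visited it no longer changes the weights `Q_i`, so a later
visit `a → x → b` can be cut short to `a → b`: both edges carry the same weight, and
`c a b ≤ c a x + c x b`. Cutting out every later visit of the first vertex and recursing on
the rest of the sequence yields `firstDedup w`.
-/

section

variable {V : Type*} [DecidableEq V] {p : V → ℝ} {c : V → V → ℝ}

lemma xiFvAux_cons_le_cons_cons (hp : ∀ v, p v ≤ 1) (hc0 : ∀ a b, 0 ≤ c a b)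
    (htri : ∀ a b b', c a b' ≤ c a b + c b b') {S : Finset V} {a x : V}
    (hx : x ∈ insert a S) (l : List V) :
    xiFvAux p c S (a :: l) ≤ xiFvAux p c S (a :: x :: l) := by
  have hQ : 0 ≤ ∏ u ∈ insert a S, (1 - p u) :=
    Finset.prod_nonneg fun u _ => sub_nonneg.2 (hp u)
  cases l with
  | nil =>
    simpa [xiFvAux] using mul_nonneg hQ (hc0 a x)
  | cons b l =>
    simp only [xiFvAux, Finset.insert_eq_self.2 hx]
    linarith [mul_le_mul_of_nonneg_left (htri a x b) hQ]

lemma xiFvAux_cons_filter_ne_le (hp : ∀ v, p v ≤ 1) (hc0 : ∀ a b, 0 ≤ c a b)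
    (htri : ∀ a b b', c a b' ≤ c a b + c b b') {x : V} (l : List V) :
    ∀ {S : Finset V} {a : V}, x ∈ insert a S →
      xiFvAux p c S (a :: l.filter (· ≠ x)) ≤ xiFvAux p c S (a :: l) := by
  induction l with
  | nil => simp
  | cons b l ih =>
    intro S a hx
    by_cases hbx : b = x
    · subst hbx
      simpa using (ih hx).trans (xiFvAux_cons_le_cons_cons hp hc0 htri hx l)
    · have hx' : x ∈ insert b (insert a S) := Finset.mem_insert_of_mem hx
      simpa [hbx, xiFvAux] using ih hx'

lemma xiFvAux_cons_firstDedup_le (hp : ∀ v, p v ≤ 1) (hc0 : ∀ a b, 0 ≤ c a b)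
    (htri : ∀ a b b', c a b' ≤ c a b + c b b') (l : List V) :
    ∀ (S : Finset V) (a : V),
      xiFvAux p c S (a :: firstDedup l) ≤ xiFvAux p c S (a :: l) := by
  induction l using firstDedup.induct with
  | case1 => simp [firstDedup]
  | case2 b l ih =>
    intro S a
    -- `firstDedup.induct` phrases the recursive call through `List.attach`
    rw [List.unattach_filter (g := (· ≠ b)) (hf := fun _ _ => rfl), List.unattach_attach] at ih
    rw [firstDedup]
    simp only [xiFvAux, add_le_add_iff_left]
    exact (ih _ b).trans
      (xiFvAux_cons_filter_ne_le hp hc0 htri l (Finset.mem_insert_self b _))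

end

/-- **iterated cutshort.** For `0 ≤ p v < 1`, nonnegative edge
costs satisfying the triangle inequality, and any finite sequence `w` of
vertices, removing all repeated visits (keeping first occurrences) does not
increase the first-visit expected cost: `ξ_fv(w') ≤ ξ_fv(w)`. -/
theorem firstDedup_xiFv_le {V : Type*} [DecidableEq V]
    (p : V → ℝ) (hp : ∀ v, 0 ≤ p v ∧ p v < 1)
    (c : V → V → ℝ) (hc0 : ∀ a b, 0 ≤ c a b)
    (htri : ∀ a b b', c a b' ≤ c a b + c b b')
    (w : List V) :
    xiFv p c (firstDedup w) ≤ xiFv p c w := by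
  have hp1 : ∀ v, p v ≤ 1 := fun v => (hp v).2.le
  cases w with
  | nil => simp [firstDedup]
  | cons a l =>
    rw [firstDedup, xiFv, xiFv]
    exact (xiFvAux_cons_firstDedup_le hp1 hc0 htri _ ∅ a).trans
      (xiFvAux_cons_filter_ne_le hp1 hc0 htri l (Finset.mem_insert_self a ∅))
end

section
/- Let V be a set, let p : V → ℝ satisfy 0 ≤ p(v) < 1 for all v, and let c : V × V → ℝ be nonnegative. Let π_1 = (a_1, …, a_m) and π_2 = (b_1, …, b_n) be duplicate-free sequences of vertices ending at the same vertex (a_m = b_n), such that the vertex set of π_1 contains the vertex set of π_2 and ξ(π_1) ≤ ξ(π_2). Then for every finite sequence σ of vertices, ξ_fv(π_1 ++ σ) ≤ ξ_fv(π_2 ++ σ), where ++ denotes concatenation. -/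
/-- Expected path cost, auxiliary: `q` is the probability of not having found
the target before the current list; the edge `c a b` is weighted by
`q * (1 - p a)`. -/
noncomputable def xiAux {V : Type*} (p : V → ℝ) (c : V → V → ℝ) : ℝ → List V → ℝ
  | _, [] => 0
  | _, [_] => 0
  | q, a :: b :: l => q * (1 - p a) * c a b + xiAux p c (q * (1 - p a)) (b :: l)

/-- Expected path cost `ξ(v_1, …, v_M) = ∑_{i=1}^{M-1} q_i * c(v_i, v_{i+1})`
with `q_i = ∏_{j=1}^{i} (1 - p v_j)` (`ξ` of a single-vertex or empty path
is `0`). -/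
noncomputable def xi {V : Type*} (p : V → ℝ) (c : V → V → ℝ) (w : List V) : ℝ :=
  xiAux p c 1 w

/-!
Split `ξ_fv(π ++ σ)` at the last vertex `v` of `π`. The part along `π` is `ξ(π)`, since `π` is
duplicate-free; the part along `v :: σ` depends on `π` only through its vertex set `S`, and
is antitone in `S` because every weight `∏_{u ∈ S ∪ …} (1 - p u)` is a product of factors
in `[0, 1]`. Both parts are therefore no larger for `π₁` than for `π₂`.
-/

section FirstVisitCost

variable {V : Type*} [DecidableEq V] (p : V → ℝ) (c : V → V → ℝ)

theorem xiFvAux_cons_eq_insert (S : Finset V) (a : V) (l : List V) :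
    xiFvAux p c S (a :: l) = xiFvAux p c (insert a S) (a :: l) := by
  cases l <;> simp [xiFvAux]

theorem xiFvAux_append (S : Finset V) (σ : List V) :
    ∀ (w : List V) (hw : w ≠ []),
      xiFvAux p c S (w ++ σ) = xiFvAux p c S w + xiFvAux p c (S ∪ w.toFinset) (w.getLast hw :: σ)
  | [a], _ => by
    rw [List.singleton_append, xiFvAux_cons_eq_insert]
    simp [xiFvAux]
  | a :: b :: l, _ => by
    have hset : insert a S ∪ (b :: l).toFinset = S ∪ (a :: b :: l).toFinset := by
      ext; simp [or_left_comm]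
    simp only [List.cons_append, xiFvAux]
    rw [← List.cons_append, xiFvAux_append (insert a S) σ (b :: l) (List.cons_ne_nil _ _),
      hset, List.getLast_cons (List.cons_ne_nil _ _), add_assoc]

theorem xiFvAux_eq_xiAux :
    ∀ (w : List V) (S : Finset V), w.Nodup → Disjoint S w.toFinset →
      xiFvAux p c S w = xiAux p c (∏ u ∈ S, (1 - p u)) w
  | [], _, _, _ => rfl
  | [_], _, _, _ => rfl
  | a :: b :: l, S, hw, hS => by
    have haS : a ∉ S := Finset.disjoint_right.mp hS (by simp)
    have hS' : Disjoint (insert a S) (b :: l).toFinset := by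
      rw [Finset.disjoint_insert_left]
      exact ⟨by simpa using (List.nodup_cons.mp hw).1,
        hS.mono_right (by simp [Finset.subset_insert])⟩
    rw [xiFvAux, xiAux, xiFvAux_eq_xiAux (b :: l) (insert a S) hw.of_cons hS',
      Finset.prod_insert haS, mul_comm (1 - p a)]

theorem xiFv_eq_xi {w : List V} (hw : w.Nodup) : xiFv p c w = xi p c w := by
  rw [xiFv, xiFvAux_eq_xiAux p c w ∅ hw (Finset.disjoint_empty_left _), Finset.prod_empty, xi]

theorem xiFv_append_of_nodup {w : List V} (hw : w.Nodup) (hne : w ≠ []) (σ : List V) :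
    xiFv p c (w ++ σ) = xi p c w + xiFvAux p c w.toFinset (w.getLast hne :: σ) := by
  rw [xiFv, xiFvAux_append p c ∅ σ w hne, ← xiFv, xiFv_eq_xi p c hw, Finset.empty_union]

theorem xiFvAux_antitone (hp0 : ∀ v, 0 ≤ p v) (hp1 : ∀ v, p v ≤ 1) (hc : ∀ a b, 0 ≤ c a b) :
    ∀ l : List V, Antitone fun S => xiFvAux p c S l
  | [] => fun _ _ _ => le_rfl
  | [_] => fun _ _ _ => le_rfl
  | a :: b :: l => fun S T hST => by
    have hins : insert a S ⊆ insert a T := Finset.insert_subset_insert a hST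
    have hprod := Finset.prod_anti_set_of_le_one (f := fun u => 1 - p u)
      (fun u => by linarith [hp1 u]) (fun u => by linarith [hp0 u]) hins
    exact add_le_add (mul_le_mul_of_nonneg_right hprod (hc a b))
      (xiFvAux_antitone hp0 hp1 hc (b :: l) hins)

end FirstVisitCost

/-- Let `0 ≤ p v < 1` and `c` be nonnegative. If `π₁` and
`π₂` are duplicate-free sequences ending at the same vertex, the vertex set of
`π₁` contains that of `π₂`, and `ξ(π₁) ≤ ξ(π₂)`, then appending any completion
`σ` preserves the comparison of first-visit expected costs:
`ξ_fv(π₁ ++ σ) ≤ ξ_fv(π₂ ++ σ)`. -/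
theorem dominating_prefix_append {V : Type*} [DecidableEq V]
    (p : V → ℝ) (hp : ∀ v, 0 ≤ p v ∧ p v < 1)
    (c : V → V → ℝ) (hc0 : ∀ a b, 0 ≤ c a b)
    (π₁ π₂ : List V) (h₁ : π₁.Nodup) (h₂ : π₂.Nodup)
    (hne₁ : π₁ ≠ []) (hne₂ : π₂ ≠ [])
    (hlast : π₁.getLast hne₁ = π₂.getLast hne₂)
    (hsub : π₂.toFinset ⊆ π₁.toFinset)
    (hxi : xi p c π₁ ≤ xi p c π₂) :
    ∀ σ : List V, xiFv p c (π₁ ++ σ) ≤ xiFv p c (π₂ ++ σ) := by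
  intro σ
  have htail := xiFvAux_antitone p c (fun v => (hp v).1) (fun v => (hp v).2.le) hc0
    (π₂.getLast hne₂ :: σ) hsub
  rw [xiFv_append_of_nodup p c h₁ hne₁, xiFv_append_of_nodup p c h₂ hne₂, hlast]
  exact add_le_add hxi htail
end

section
/- Let V be a finite set of vertices, let p : V → ℝ satisfy 0 ≤ p(v) < 1 for all v, and let c : V × V → ℝ be nonnegative and satisfy the triangle inequality c(a, b') ≤ c(a, b) + c(b, b') for all a, b, b' ∈ V. Let π_1 and π_2 be duplicate-free sequences of vertices ending at the same vertex, such that the vertex set A_1 of π_1 contains the vertex set A_2 of π_2 and ξ(π_1) ≤ ξ(π_2). Then for every duplicate-free sequence σ whose entries are exactly the vertices of V \ A_2 (so that π_2 ++ σ visits every vertex of V exactly once), there exists a duplicate-free sequence σ' whose entries are exactly the vertices of V \ A_1 such that ξ(π_1 ++ σ') ≤ ξ(π_2 ++ σ). Consequently, a dominated prefix cannot lead to a better full solution than the dominating prefix. -/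
section

variable {V : Type*} (p : V → ℝ) (c : V → V → ℝ)

def survivalProb (l : List V) : ℝ := (l.map (1 - p ·)).prod

theorem survivalProb_nil : survivalProb p [] = 1 := rfl

theorem survivalProb_cons (a : V) (l : List V) :
    survivalProb p (a :: l) = (1 - p a) * survivalProb p l := List.prod_cons

theorem survivalProb_append (l m : List V) :
    survivalProb p (l ++ m) = survivalProb p l * survivalProb p m := by
  simp only [survivalProb, List.map_append, List.prod_append]

theorem survivalProb_nonneg (hp1 : ∀ v, p v ≤ 1) (l : List V) : 0 ≤ survivalProb p l :=
  List.prod_nonneg fun _ hx => by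
    obtain ⟨v, -, rfl⟩ := List.mem_map.mp hx
    linarith [hp1 v]

theorem survivalProb_le_one (hp0 : ∀ v, 0 ≤ p v) (hp1 : ∀ v, p v ≤ 1) (l : List V) :
    survivalProb p l ≤ 1 := by
  induction l with
  | nil => rfl
  | cons a l ih =>
    rw [survivalProb_cons]
    exact mul_le_one₀ (by linarith [hp0 a]) (survivalProb_nonneg p hp1 l) ih

theorem List.Sublist.survivalProb_le (hp0 : ∀ v, 0 ≤ p v) (hp1 : ∀ v, p v ≤ 1)
    {l m : List V} (h : l.Sublist m) : survivalProb p m ≤ survivalProb p l := by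
  induction h with
  | slnil => rfl
  | cons a _ ih =>
    rw [survivalProb_cons]
    exact (mul_le_of_le_one_left (survivalProb_nonneg p hp1 _) (by linarith [hp0 a])).trans ih
  | cons_cons a _ ih =>
    rw [survivalProb_cons, survivalProb_cons]
    exact mul_le_mul_of_nonneg_left ih (by linarith [hp1 a])

theorem List.Subperm.survivalProb_le (hp0 : ∀ v, 0 ≤ p v) (hp1 : ∀ v, p v ≤ 1)
    {l m : List V} (h : l.Subperm m) : survivalProb p m ≤ survivalProb p l := by
  obtain ⟨l', hperm, hsub⟩ := h
  exact (hsub.survivalProb_le p hp0 hp1).trans_eq (hperm.map _).prod_eq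

theorem xiAux_eq_mul_xi : ∀ (q : ℝ) (l : List V), xiAux p c q l = q * xi p c l
  | _, [] => by simp [xi, xiAux]
  | _, [_] => by simp [xi, xiAux]
  | q, a :: b :: l => by
    rw [xi, xiAux, xiAux, xiAux_eq_mul_xi _ (b :: l), xiAux_eq_mul_xi _ (b :: l)]
    ring

theorem xi_singleton (a : V) : xi p c [a] = 0 := rfl

theorem xi_cons_cons (a b : V) (l : List V) :
    xi p c (a :: b :: l) = (1 - p a) * (c a b + xi p c (b :: l)) := by
  rw [xi, xiAux, xiAux_eq_mul_xi]
  ring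

theorem xi_nonneg (hp1 : ∀ v, p v ≤ 1) (hc0 : ∀ a b, 0 ≤ c a b) :
    ∀ l : List V, 0 ≤ xi p c l
  | [] => le_rfl
  | [_] => le_rfl
  | a :: b :: l => by
    rw [xi_cons_cons]
    exact mul_nonneg (by linarith [hp1 a]) (add_nonneg (hc0 a b) (xi_nonneg hp1 hc0 (b :: l)))

theorem xi_append_cons (τ : List V) (v : V) (σ : List V) :
    xi p c (τ ++ v :: σ) = xi p c (τ ++ [v]) + survivalProb p τ * xi p c (v :: σ) := by
  induction τ with
  | nil => simp [xi_singleton, survivalProb_nil]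
  | cons a τ ih =>
    cases τ with
    | nil => simp [xi_cons_cons, xi_singleton, survivalProb_cons, survivalProb_nil]; ring
    | cons b τ =>
      simp only [List.cons_append] at ih ⊢
      rw [xi_cons_cons, xi_cons_cons, ih]
      simp only [survivalProb_cons]
      ring

theorem mul_xi_cons_le_xi_cons_cons (hp0 : ∀ v, 0 ≤ p v) (hp1 : ∀ v, p v ≤ 1)
    (hc0 : ∀ a b, 0 ≤ c a b) (htri : ∀ a b b', c a b' ≤ c a b + c b b')
    (a b : V) (l : List V) : (1 - p b) * xi p c (a :: l) ≤ xi p c (a :: b :: l) := by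
  cases l with
  | nil => rw [xi_singleton, mul_zero]; exact xi_nonneg p c hp1 hc0 _
  | cons x l =>
    have ha : 0 ≤ 1 - p a := by linarith [hp1 a]
    have hb : 0 ≤ 1 - p b := by linarith [hp1 b]
    have detour : (1 - p b) * c a x ≤ c a b + (1 - p b) * c b x := calc
      (1 - p b) * c a x ≤ (1 - p b) * (c a b + c b x) := mul_le_mul_of_nonneg_left (htri a b x) hb
      _ ≤ c a b + (1 - p b) * c b x := by nlinarith [hp0 b, hc0 a b]
    rw [xi_cons_cons, xi_cons_cons, xi_cons_cons]
    nlinarith [mul_le_mul_of_nonneg_left detour ha]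

theorem survivalProb_filter_mul_xi_le (hp0 : ∀ v, 0 ≤ p v) (hp1 : ∀ v, p v ≤ 1)
    (hc0 : ∀ a b, 0 ≤ c a b) (htri : ∀ a b b', c a b' ≤ c a b + c b b')
    (P : V → Prop) [DecidablePred P] (a : V) (l : List V) :
    survivalProb p (l.filter (P ·)) * xi p c (a :: l.filter (¬P ·)) ≤ xi p c (a :: l) := by
  induction l generalizing a with
  | nil => simp [survivalProb_nil]
  | cons b l ih =>
    set K := survivalProb p (l.filter (P ·))
    set l' := l.filter (¬P ·)
    have hK0 : 0 ≤ K := survivalProb_nonneg p hp1 _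
    have hK1 : K ≤ 1 := survivalProb_le_one p hp0 hp1 _
    have step : K * xi p c (a :: b :: l') ≤ xi p c (a :: b :: l) := by
      rw [xi_cons_cons, xi_cons_cons]
      have hKc : K * c a b ≤ c a b := mul_le_of_le_one_left (hc0 a b) hK1
      have ha : 0 ≤ 1 - p a := by linarith [hp1 a]
      nlinarith [mul_le_mul_of_nonneg_left (add_le_add hKc (ih b)) ha]
    by_cases hb : P b
    · rw [List.filter_cons_of_pos (by simpa), List.filter_cons_of_neg (by simpa),
        survivalProb_cons]
      calc (1 - p b) * K * xi p c (a :: l') = K * ((1 - p b) * xi p c (a :: l')) := by ring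
        _ ≤ K * xi p c (a :: b :: l') := mul_le_mul_of_nonneg_left
          (mul_xi_cons_le_xi_cons_cons p c hp0 hp1 hc0 htri a b l') hK0
        _ ≤ xi p c (a :: b :: l) := step
    · rw [List.filter_cons_of_neg (by simpa), List.filter_cons_of_pos (by simpa)]
      exact step

theorem append_filter_mem_subperm [DecidableEq V] {τ₁ τ₂ σ : List V} {v : V}
    (h₂ : (τ₂ ++ [v]).Nodup) (hσ : σ.Nodup) (hσ₂ : ∀ x ∈ σ, x ∉ τ₂ ++ [v])
    (hsub : τ₂ ++ [v] ⊆ τ₁ ++ [v]) : (τ₂ ++ σ.filter (· ∈ τ₁ ++ [v])).Subperm τ₁ := by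
  have hvτ₂ : v ∉ τ₂ := fun hv => List.disjoint_of_nodup_append h₂ hv (List.mem_singleton_self v)
  refine List.subperm_of_subset ?_ fun x hx => ?_
  · refine List.nodup_append.2 ⟨h₂.sublist (List.sublist_append_left _ _), hσ.filter _, ?_⟩
    intro x hx y hy hxy
    subst hxy
    exact hσ₂ x (List.mem_filter.1 hy).1 (List.mem_append_left _ hx)
  · rcases List.mem_append.1 hx with hx | hx
    · have hxv : x ≠ v := fun h => hvτ₂ (h ▸ hx)
      simpa [hxv] using hsub (List.mem_append_left _ hx)
    · obtain ⟨hxσ, hx₁⟩ := List.mem_filter.1 hx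
      have hxv : x ≠ v := fun h => hσ₂ x hxσ (by simp [h])
      simpa [hxv] using hx₁

end

theorem dominance_lemma_general {V : Type*} [Fintype V] [DecidableEq V]
    (p : V → ℝ) (hp : ∀ v, 0 ≤ p v ∧ p v < 1)
    (c : V → V → ℝ) (hc0 : ∀ a b, 0 ≤ c a b)
    (htri : ∀ a b b', c a b' ≤ c a b + c b b')
    (π₁ π₂ : List V) (h₂ : π₂.Nodup)
    (hne₁ : π₁ ≠ []) (hne₂ : π₂ ≠ [])
    (hlast : π₁.getLast hne₁ = π₂.getLast hne₂)
    (hsub : π₂.toFinset ⊆ π₁.toFinset)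
    (hxi : xi p c π₁ ≤ xi p c π₂)
    (σ : List V) (hσ : σ.Nodup)
    (hσset : σ.toFinset = Finset.univ \ π₂.toFinset) :
    ∃ σ' : List V, σ'.Nodup ∧ σ'.toFinset = Finset.univ \ π₁.toFinset ∧
      xi p c (π₁ ++ σ') ≤ xi p c (π₂ ++ σ) := by
  have hp0 : ∀ v, 0 ≤ p v := fun v => (hp v).1
  have hp1 : ∀ v, p v ≤ 1 := fun v => (hp v).2.le
  obtain ⟨τ₁, v, rfl⟩ : ∃ τ v, π₁ = τ ++ [v] := ⟨_, _, (List.dropLast_append_getLast hne₁).symm⟩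
  obtain ⟨τ₂, w, rfl⟩ : ∃ τ w, π₂ = τ ++ [w] := ⟨_, _, (List.dropLast_append_getLast hne₂).symm⟩
  obtain rfl : v = w := by simpa using hlast
  have hσ₂ : ∀ x ∈ σ, x ∉ τ₂ ++ [v] := fun x hx => by
    simpa only [hσset, Finset.mem_sdiff, List.mem_toFinset, Finset.mem_univ, true_and]
      using List.mem_toFinset.2 hx
  replace hsub : τ₂ ++ [v] ⊆ τ₁ ++ [v] := fun x hx =>
    List.mem_toFinset.1 (hsub (List.mem_toFinset.2 hx))
  set σ₁ := σ.filter (· ∈ τ₁ ++ [v])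
  set σ' := σ.filter (· ∉ τ₁ ++ [v])
  refine ⟨σ', hσ.filter _, ?_, ?_⟩
  · ext x
    simp only [σ', List.toFinset_filter, hσset, Finset.mem_filter, Finset.mem_sdiff,
      Finset.mem_univ, true_and, List.mem_toFinset, decide_eq_true_eq]
    exact ⟨And.right, fun hx => ⟨mt (@hsub x) hx, hx⟩⟩
  · simp only [List.append_assoc, List.singleton_append]
    rw [xi_append_cons p c τ₁ v, xi_append_cons p c τ₂ v σ]
    calc _ ≤ xi p c (τ₂ ++ [v]) + survivalProb p (τ₂ ++ σ₁) * xi p c (v :: σ') :=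
          add_le_add hxi (mul_le_mul_of_nonneg_right
            ((append_filter_mem_subperm h₂ hσ hσ₂ hsub).survivalProb_le p hp0 hp1)
            (xi_nonneg p c hp1 hc0 _))
      _ = xi p c (τ₂ ++ [v]) + survivalProb p τ₂ * (survivalProb p σ₁ * xi p c (v :: σ')) := by
          rw [survivalProb_append, mul_assoc]
      _ ≤ xi p c (τ₂ ++ [v]) + survivalProb p τ₂ * xi p c (v :: σ) := by
          gcongr
          · exact survivalProb_nonneg p hp1 τ₂
          · exact survivalProb_filter_mul_xi_le p c hp0 hp1 hc0 htri _ v σ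

/-- **dominance Lemma.** Let `V` be a finite set of vertices,
`0 ≤ p v < 1`, and `c` nonnegative edge costs satisfying the triangle
inequality. Let `π₁`, `π₂` be duplicate-free sequences ending at the same
vertex with `π₁.toFinset ⊇ π₂.toFinset` and `ξ(π₁) ≤ ξ(π₂)`. Then for every
duplicate-free sequence `σ` whose entries are exactly the vertices of
`V \ π₂.toFinset` (so `π₂ ++ σ` visits every vertex exactly once), there is a
duplicate-free sequence `σ'` whose entries are exactly the vertices of
`V \ π₁.toFinset` with `ξ(π₁ ++ σ') ≤ ξ(π₂ ++ σ)`: a dominated prefix cannot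
lead to a better full solution than the dominating prefix. -/
theorem dominance_lemma {V : Type*} [Fintype V] [DecidableEq V]
    (p : V → ℝ) (hp : ∀ v, 0 ≤ p v ∧ p v < 1)
    (c : V → V → ℝ) (hc0 : ∀ a b, 0 ≤ c a b)
    (htri : ∀ a b b', c a b' ≤ c a b + c b b')
    (π₁ π₂ : List V) (h₁ : π₁.Nodup) (h₂ : π₂.Nodup)
    (hne₁ : π₁ ≠ []) (hne₂ : π₂ ≠ [])
    (hlast : π₁.getLast hne₁ = π₂.getLast hne₂)
    (hsub : π₂.toFinset ⊆ π₁.toFinset)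
    (hxi : xi p c π₁ ≤ xi p c π₂)
    (σ : List V) (hσ : σ.Nodup)
    (hσset : σ.toFinset = Finset.univ \ π₂.toFinset) :
    ∃ σ' : List V, σ'.Nodup ∧ σ'.toFinset = Finset.univ \ π₁.toFinset ∧
      xi p c (π₁ ++ σ') ≤ xi p c (π₂ ++ σ) :=
  dominance_lemma_general p hp c hc0 htri π₁ π₂ h₂ hne₁ hne₂ hlast hsub hxi σ hσ hσset
end
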